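/- arXiv:0708.3649 — 2 statements merged into one kernel-verified Lean document; each statement's English description precedes it below -/
import Mathlib

section
/- Let F and G be two bicomplex functions defined on a domain D₀ ⊆ 𝕋, with idempotent components F_{e1} = P₁∘F, F_{e2} = P₂∘F, G_{e1} = P₁∘G, G_{e2} = P₂∘G. If for every ω ∈ D₀ one has Im{conj(F_{e1}(ω))·G_{e1}(ω)} ≠ 0 or Im{conj(F_{e2}(ω))·G_{e2}(ω)} ≠ 0, then Vec{F(ω)†₃G(ω)} ≠ 0 for all ω ∈ D₀. -/
noncomputable section

open Complex Filter Topology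

/-- The bicomplex numbers `𝕋 = {z₁ + z₂ i₂ : z₁, z₂ ∈ ℂ(i₁)}`, represented by the pair
of `ℂ(i₁)`-components `(z₁, z₂)`. -/
@[ext] structure Bicomplex : Type where
  z1 : ℂ
  z2 : ℂ

namespace Bicomplex

instance : Zero Bicomplex := ⟨⟨0, 0⟩⟩
instance : One Bicomplex := ⟨⟨1, 0⟩⟩
instance : Add Bicomplex := ⟨fun w v => ⟨w.z1 + v.z1, w.z2 + v.z2⟩⟩
instance : Neg Bicomplex := ⟨fun w => ⟨-w.z1, -w.z2⟩⟩
instance : Mul Bicomplex := ⟨fun w v => ⟨w.z1 * v.z1 - w.z2 * v.z2, w.z1 * v.z2 + w.z2 * v.z1⟩⟩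

@[simp] lemma zero_z1 : (0 : Bicomplex).z1 = 0 := rfl
@[simp] lemma zero_z2 : (0 : Bicomplex).z2 = 0 := rfl
@[simp] lemma one_z1 : (1 : Bicomplex).z1 = 1 := rfl
@[simp] lemma one_z2 : (1 : Bicomplex).z2 = 0 := rfl
@[simp] lemma add_z1 (w v : Bicomplex) : (w + v).z1 = w.z1 + v.z1 := rfl
@[simp] lemma add_z2 (w v : Bicomplex) : (w + v).z2 = w.z2 + v.z2 := rfl
@[simp] lemma neg_z1 (w : Bicomplex) : (-w).z1 = -w.z1 := rfl
@[simp] lemma neg_z2 (w : Bicomplex) : (-w).z2 = -w.z2 := rfl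
@[simp] lemma mul_z1 (w v : Bicomplex) : (w * v).z1 = w.z1 * v.z1 - w.z2 * v.z2 := rfl
@[simp] lemma mul_z2 (w v : Bicomplex) : (w * v).z2 = w.z1 * v.z2 + w.z2 * v.z1 := rfl

/-- The bicomplex numbers form a commutative ring. -/
instance : CommRing Bicomplex where
  nsmul n w := ⟨n • w.z1, n • w.z2⟩
  zsmul n w := ⟨n • w.z1, n • w.z2⟩
  nsmul_zero a := by ext <;> exact zero_smul _ _
  nsmul_succ n a := by ext <;> exact succ_nsmul _ _
  zsmul_zero' a := by ext <;> exact zero_smul _ _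
  zsmul_succ' n a := by ext <;> exact SubNegMonoid.zsmul_succ' _ _
  zsmul_neg' n a := by ext <;> exact SubNegMonoid.zsmul_neg' _ _
  add_assoc a b c := by ext <;> simp <;> ring
  zero_add a := by ext <;> simp
  add_zero a := by ext <;> simp
  add_comm a b := by ext <;> simp <;> ring
  neg_add_cancel a := by ext <;> simp
  mul_assoc a b c := by ext <;> simp <;> ring
  one_mul a := by ext <;> simp
  mul_one a := by ext <;> simp
  left_distrib a b c := by ext <;> simp <;> ring
  right_distrib a b c := by ext <;> simp <;> ring
  zero_mul a := by ext <;> simp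
  mul_zero a := by ext <;> simp
  mul_comm a b := by ext <;> simp <;> ring

/-- Inverse: `w⁻¹ = w†₂ / (z₁² + z₂²)` (junk value `0/0` on the null-cone). -/
instance : Inv Bicomplex :=
  ⟨fun w => ⟨w.z1 / (w.z1 ^ 2 + w.z2 ^ 2), -w.z2 / (w.z1 ^ 2 + w.z2 ^ 2)⟩⟩

instance : Div Bicomplex := ⟨fun w v => w * v⁻¹⟩

/-- Embedding of `ℂ(i₁)` into `𝕋`. -/
def ofComplex (c : ℂ) : Bicomplex := ⟨c, 0⟩

/-- Embedding of `ℝ` into `𝕋`. -/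
def ofReal (t : ℝ) : Bicomplex := ⟨(t : ℂ), 0⟩

/-- The imaginary unit `i₁`. -/
def i1 : Bicomplex := ⟨Complex.I, 0⟩

/-- The imaginary unit `i₂`. -/
def i2 : Bicomplex := ⟨0, 1⟩

/-- The hyperbolic unit `j = i₁ i₂`. -/
def jj : Bicomplex := ⟨0, Complex.I⟩

/-- The idempotent `e₁ = (1 + j)/2`. -/
def e1 : Bicomplex := ⟨1 / 2, Complex.I / 2⟩

/-- The idempotent `e₂ = (1 - j)/2`. -/
def e2 : Bicomplex := ⟨1 / 2, -(Complex.I) / 2⟩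

/-- The projection `P₁(z₁ + z₂ i₂) = z₁ - z₂ i₁`. -/
def P1 (w : Bicomplex) : ℂ := w.z1 - w.z2 * Complex.I

/-- The projection `P₂(z₁ + z₂ i₂) = z₁ + z₂ i₁`. -/
def P2 (w : Bicomplex) : ℂ := w.z1 + w.z2 * Complex.I

/-- The conjugation `w†₁ = z̄₁ + z̄₂ i₂`. -/
def dag1 (w : Bicomplex) : Bicomplex := ⟨(starRingEnd ℂ) w.z1, (starRingEnd ℂ) w.z2⟩

/-- The conjugation `w†₂ = z₁ - z₂ i₂`. -/
def dag2 (w : Bicomplex) : Bicomplex := ⟨w.z1, -w.z2⟩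

/-- The conjugation `w†₃ = z̄₁ - z̄₂ i₂`. -/
def dag3 (w : Bicomplex) : Bicomplex := ⟨(starRingEnd ℂ) w.z1, -((starRingEnd ℂ) w.z2)⟩

/-- `𝕋` as `ℂ × ℂ`. -/
def toProd (w : Bicomplex) : ℂ × ℂ := (w.z1, w.z2)

/-- `ℂ × ℂ` as `𝕋`. -/
def ofProd (p : ℂ × ℂ) : Bicomplex := ⟨p.1, p.2⟩

instance : TopologicalSpace Bicomplex := TopologicalSpace.induced toProd inferInstance

/-- The set of points `w` such that `w - w₀` is invertible (i.e. not a zero divisor). -/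
def invertibleDiff (w₀ : Bicomplex) : Set Bicomplex :=
  {w | (w - w₀).z1 ^ 2 + (w - w₀).z2 ^ 2 ≠ 0}

/-- `f` is `𝕋`-differentiable at `w₀` with derivative `d`:
`(f w - f w₀)/(w - w₀) → d` as `w → w₀` with `w - w₀` invertible. -/
def HasTDerivAt (f : Bicomplex → Bicomplex) (d w₀ : Bicomplex) : Prop :=
  Tendsto (fun w => (f w - f w₀) / (w - w₀)) (𝓝[invertibleDiff w₀] w₀) (𝓝 d)

/-- `f` is `𝕋`-holomorphic on `U` if it is `𝕋`-differentiable at each point of `U`. -/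
def THolomorphicOn (f : Bicomplex → Bicomplex) (U : Set Bicomplex) : Prop :=
  ∀ w ∈ U, ∃ d, HasTDerivAt f d w

/-- `f` viewed as a map `ℂ² → ℂ²`. -/
def fProd (f : Bicomplex → Bicomplex) : ℂ × ℂ → ℂ × ℂ := fun p => toProd (f (ofProd p))

/-- `f : 𝕋 → 𝕋` is `n` times continuously (real-)differentiable on `U`. -/
def TContDiffOn (n : ℕ∞) (f : Bicomplex → Bicomplex) (U : Set Bicomplex) : Prop :=
  ContDiffOn ℝ n (fProd f) (toProd '' U)

/-- `g : 𝕋 → ℂ` is `n` times continuously (real-)differentiable on `U`. -/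
def CContDiffOn (n : ℕ∞) (g : Bicomplex → ℂ) (U : Set Bicomplex) : Prop :=
  ContDiffOn ℝ n (fun p => g (ofProd p)) (toProd '' U)

/-- Real partial derivative of `g : 𝕋 → ℂ` at `w` in direction `e`. -/
def pd (e : Bicomplex) (g : Bicomplex → ℂ) (w : Bicomplex) : ℂ :=
  deriv (fun t : ℝ => g (w + ofReal t * e)) 0

/-- Existence of the real partial derivative of `g : 𝕋 → ℂ` at `w` in direction `e`. -/
def pdExists (e : Bicomplex) (g : Bicomplex → ℂ) (w : Bicomplex) : Prop :=
  DifferentiableAt ℝ (fun t : ℝ => g (w + ofReal t * e)) 0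

/-- The scalar (`ℂ(i₁)`-) component `f₁` of `f = f₁ + f₂ i₂`. -/
def s1 (f : Bicomplex → Bicomplex) : Bicomplex → ℂ := fun w => (f w).z1

/-- The vectorial (`ℂ(i₁)`-) component `f₂` of `f = f₁ + f₂ i₂`. -/
def s2 (f : Bicomplex → Bicomplex) : Bicomplex → ℂ := fun w => (f w).z2

/-- Real partial derivative of `f : 𝕋 → 𝕋` in direction `e`. -/
def pdT (e : Bicomplex) (f : Bicomplex → Bicomplex) : Bicomplex → Bicomplex :=
  fun w => ⟨pd e (s1 f) w, pd e (s2 f) w⟩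

/-- Existence of the real partial derivative of `f : 𝕋 → 𝕋` in direction `e`. -/
def pdTExists (e : Bicomplex) (f : Bicomplex → Bicomplex) (w : Bicomplex) : Prop :=
  pdExists e (s1 f) w ∧ pdExists e (s2 f) w

/-- `∂_{z₁} g = ½(∂ₓ g - i₁ ∂_y g)` for `g : 𝕋 → ℂ`. -/
def dz1 (g : Bicomplex → ℂ) : Bicomplex → ℂ :=
  fun w => (pd 1 g w - Complex.I * pd i1 g w) / 2

/-- `∂_{z̄₁} g = ½(∂ₓ g + i₁ ∂_y g)` for `g : 𝕋 → ℂ`. -/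
def dz1bar (g : Bicomplex → ℂ) : Bicomplex → ℂ :=
  fun w => (pd 1 g w + Complex.I * pd i1 g w) / 2

/-- `∂_{z₂} g = ½(∂_p g - i₁ ∂_q g)` for `g : 𝕋 → ℂ`. -/
def dz2 (g : Bicomplex → ℂ) : Bicomplex → ℂ :=
  fun w => (pd i2 g w - Complex.I * pd jj g w) / 2

/-- `∂_{z̄₂} g = ½(∂_p g + i₁ ∂_q g)` for `g : 𝕋 → ℂ`. -/
def dz2bar (g : Bicomplex → ℂ) : Bicomplex → ℂ :=
  fun w => (pd i2 g w + Complex.I * pd jj g w) / 2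

/-- `∂_{z₁}` applied componentwise to `f : 𝕋 → 𝕋`. -/
def dZ1 (f : Bicomplex → Bicomplex) : Bicomplex → Bicomplex :=
  fun w => ⟨dz1 (s1 f) w, dz1 (s2 f) w⟩

/-- `∂_{z₂}` applied componentwise to `f : 𝕋 → 𝕋`. -/
def dZ2 (f : Bicomplex → Bicomplex) : Bicomplex → Bicomplex :=
  fun w => ⟨dz2 (s1 f) w, dz2 (s2 f) w⟩

/-- `∂_{z̄₁}` applied componentwise to `f : 𝕋 → 𝕋`. -/
def dZ1bar (f : Bicomplex → Bicomplex) : Bicomplex → Bicomplex :=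
  fun w => ⟨dz1bar (s1 f) w, dz1bar (s2 f) w⟩

/-- `∂_{z̄₂}` applied componentwise to `f : 𝕋 → 𝕋`. -/
def dZ2bar (f : Bicomplex → Bicomplex) : Bicomplex → Bicomplex :=
  fun w => ⟨dz2bar (s1 f) w, dz2bar (s2 f) w⟩

/-- `∂_ω = ½(∂_{z₁} - i₂ ∂_{z₂})`. -/
def dOm (f : Bicomplex → Bicomplex) : Bicomplex → Bicomplex :=
  fun w => ofComplex (1 / 2) * (dZ1 f w - i2 * dZ2 f w)

/-- `∂_{ω†₂} = ∂_ω̄ = ½(∂_{z₁} + i₂ ∂_{z₂})`. -/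
def dOmBar (f : Bicomplex → Bicomplex) : Bicomplex → Bicomplex :=
  fun w => ofComplex (1 / 2) * (dZ1 f w + i2 * dZ2 f w)

/-- `∂_{ω†₁} = ½(∂_{z̄₁} - i₂ ∂_{z̄₂})`. -/
def dOmDag1 (f : Bicomplex → Bicomplex) : Bicomplex → Bicomplex :=
  fun w => ofComplex (1 / 2) * (dZ1bar f w - i2 * dZ2bar f w)

/-- `∂_{ω†₃} = ½(∂_{z̄₁} + i₂ ∂_{z̄₂})`. -/
def dOmDag3 (f : Bicomplex → Bicomplex) : Bicomplex → Bicomplex :=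
  fun w => ofComplex (1 / 2) * (dZ1bar f w + i2 * dZ2bar f w)

/-- The complexified Laplacian `Δ_ℂ = ∂²_{z₁} + ∂²_{z₂}` acting on `ℂ(i₁)`-valued functions. -/
def lapC (g : Bicomplex → ℂ) : Bicomplex → ℂ :=
  fun w => dz1 (dz1 g) w + dz2 (dz2 g) w

/-- The vector part in the `i₂`-representation `w = ζ₁ + ζ₂ i₁` with `ζ₁, ζ₂ ∈ ℂ(i₂)`:
for `w = x₁ + x₂i₁ + x₃i₂ + x₄j`, `Vec(w) = x₂ + x₄ i₂`, encoded as the complex number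
`x₂ + x₄ i`. -/
def vec2 (w : Bicomplex) : ℂ := ⟨w.z1.im, w.z2.im⟩

/-- Embedding of `ℂ(i₂)` into `𝕋`: the complex number `a + b i` represents `a + b i₂`. -/
def ofC2 (c : ℂ) : Bicomplex := ⟨(c.re : ℂ), (c.im : ℂ)⟩

/-- Multiplication of hyperbolic numbers `ℂ(j) = {x + yj}`, encoded as pairs in `ℝ × ℝ`. -/
def hmul (a b : ℝ × ℝ) : ℝ × ℝ := (a.1 * b.1 + a.2 * b.2, a.1 * b.2 + a.2 * b.1)

/-- Division of hyperbolic numbers (junk value when the denominator is a zero divisor). -/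
def hdiv (a b : ℝ × ℝ) : ℝ × ℝ :=
  hmul a (b.1 / (b.1 ^ 2 - b.2 ^ 2), -b.2 / (b.1 ^ 2 - b.2 ^ 2))

/-- Embedding of the hyperbolic numbers `ℂ(j)` into `𝕋`: `(x, y) ↦ x + y j`. -/
def ofHyp (a : ℝ × ℝ) : Bicomplex := ⟨(a.1 : ℂ), (a.2 : ℂ) * Complex.I⟩

/-- The vector part in the `j`-representation `w = ζ₁ + ζ₂ i₁` with `ζ₁, ζ₂ ∈ ℂ(j)`:
for `w = x₁ + x₂i₁ + x₃i₂ + x₄j`, `Vec(w) = x₂ - x₃ j`, encoded as the pair `(x₂, -x₃)`. -/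
def vec3 (w : Bicomplex) : ℝ × ℝ := (w.z1.im, -w.z2.re)

/-- The `𝕋`-cartesian set `X₁ ×ₑ X₂ = {w : P₁ w ∈ X₁ ∧ P₂ w ∈ X₂}`. -/
def eProd (X₁ X₂ : Set ℂ) : Set Bicomplex := {w | P1 w ∈ X₁ ∧ P2 w ∈ X₂}

/-- `(F, G)` is an `i₁`-generating pair on `D`. -/
def GenPair1 (F G : Bicomplex → Bicomplex) (D : Set Bicomplex) : Prop :=
  TContDiffOn 2 F D ∧ TContDiffOn 2 G D ∧ ∀ w ∈ D, (dag2 (F w) * G w).z2 ≠ 0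

/-- `(F, G)` is an `i₂`-generating pair on `D`. -/
def GenPair2 (F G : Bicomplex → Bicomplex) (D : Set Bicomplex) : Prop :=
  TContDiffOn 2 F D ∧ TContDiffOn 2 G D ∧ ∀ w ∈ D, vec2 (dag1 (F w) * G w) ≠ 0

/-- `(F, G)` is a `j`-generating pair on `D`. -/
def GenPairJ (F G : Bicomplex → Bicomplex) (D : Set Bicomplex) : Prop :=
  TContDiffOn 2 F D ∧ TContDiffOn 2 G D ∧ ∀ w ∈ D, vec3 (dag3 (F w) * G w) ≠ 0

/-- The unique `λ₀ ∈ ℂ(i₁)` with `w(ω₀) = λ₀ F(ω₀) + μ₀ G(ω₀)`. -/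
def lam1 (F G wf : Bicomplex → Bicomplex) (ω₀ : Bicomplex) : ℂ :=
  (dag2 (wf ω₀) * G ω₀).z2 / (dag2 (F ω₀) * G ω₀).z2

/-- The unique `μ₀ ∈ ℂ(i₁)` with `w(ω₀) = λ₀ F(ω₀) + μ₀ G(ω₀)`. -/
def mu1 (F G wf : Bicomplex → Bicomplex) (ω₀ : Bicomplex) : ℂ :=
  -((dag2 (wf ω₀) * F ω₀).z2 / (dag2 (F ω₀) * G ω₀).z2)

/-- `w` has `(F,G)_{i₁}`-derivative `d` at `ω₀`. -/
def HasFGDeriv1 (F G wf : Bicomplex → Bicomplex) (d ω₀ : Bicomplex) : Prop :=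
  Tendsto
    (fun ω => (wf ω - ofComplex (lam1 F G wf ω₀) * F ω - ofComplex (mu1 F G wf ω₀) * G ω)
        / (ω - ω₀))
    (𝓝[invertibleDiff ω₀] ω₀) (𝓝 d)

/-- The unique `λ₀ ∈ ℂ(j)` with `w(ω₀) = λ₀ F(ω₀) + μ₀ G(ω₀)`. -/
def lamJ (F G wf : Bicomplex → Bicomplex) (ω₀ : Bicomplex) : ℝ × ℝ :=
  hdiv (vec3 (dag3 (wf ω₀) * G ω₀)) (vec3 (dag3 (F ω₀) * G ω₀))

/-- The unique `μ₀ ∈ ℂ(j)` with `w(ω₀) = λ₀ F(ω₀) + μ₀ G(ω₀)`. -/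
def muJ (F G wf : Bicomplex → Bicomplex) (ω₀ : Bicomplex) : ℝ × ℝ :=
  -(hdiv (vec3 (dag3 (wf ω₀) * F ω₀)) (vec3 (dag3 (F ω₀) * G ω₀)))

/-- `w` has `(F,G)_j`-derivative `d` at `ω₀`. -/
def HasFGDerivJ (F G wf : Bicomplex → Bicomplex) (d ω₀ : Bicomplex) : Prop :=
  Tendsto
    (fun ω => (wf ω - ofHyp (lamJ F G wf ω₀) * F ω - ofHyp (muJ F G wf ω₀) * G ω) / (ω - ω₀))
    (𝓝[invertibleDiff ω₀] ω₀) (𝓝 d)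

/-- `w` is `(F,G)_j`-pseudoanalytic on `D`. -/
def PseudoanalyticJ (F G wf : Bicomplex → Bicomplex) (D : Set Bicomplex) : Prop :=
  ∀ ω ∈ D, ∃ d, HasFGDerivJ F G wf d ω

/-- `w` has continuous partial derivatives in a neighborhood of `ω₀`. -/
def HasContPartialsNear (f : Bicomplex → Bicomplex) (w₀ : Bicomplex) : Prop :=
  ∃ V ∈ 𝓝 w₀, ∀ e ∈ ({1, i1, i2, jj} : Set Bicomplex),
    (∀ w ∈ V, pdTExists e f w) ∧ ContinuousOn (pdT e f) V

/-! Characteristic coefficients with respect to the `†₂` conjugation (`i₁` case). -/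

def denom2 (F G : Bicomplex → Bicomplex) (w : Bicomplex) : Bicomplex :=
  F w * dag2 (G w) - dag2 (F w) * G w

def aCoef2₁ (F G : Bicomplex → Bicomplex) (w : Bicomplex) : Bicomplex :=
  -((dag1 (F w) * dOmDag1 G w - dOmDag1 F w * dag1 (G w)) / denom2 F G w)

def bCoef2₁ (F G : Bicomplex → Bicomplex) (w : Bicomplex) : Bicomplex :=
  (F w * dOmDag1 G w - dOmDag1 F w * G w) / denom2 F G w

def aCoef2₂ (F G : Bicomplex → Bicomplex) (w : Bicomplex) : Bicomplex :=
  -((dag2 (F w) * dOmBar G w - dOmBar F w * dag2 (G w)) / denom2 F G w)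

def bCoef2₂ (F G : Bicomplex → Bicomplex) (w : Bicomplex) : Bicomplex :=
  (F w * dOmBar G w - dOmBar F w * G w) / denom2 F G w

def aCoef2₃ (F G : Bicomplex → Bicomplex) (w : Bicomplex) : Bicomplex :=
  -((dag3 (F w) * dOmDag3 G w - dOmDag3 F w * dag3 (G w)) / denom2 F G w)

def bCoef2₃ (F G : Bicomplex → Bicomplex) (w : Bicomplex) : Bicomplex :=
  (F w * dOmDag3 G w - dOmDag3 F w * G w) / denom2 F G w

def Acoef2 (F G : Bicomplex → Bicomplex) (w : Bicomplex) : Bicomplex :=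
  -((dag2 (F w) * dOm G w - dOm F w * dag2 (G w)) / denom2 F G w)

def Bcoef2 (F G : Bicomplex → Bicomplex) (w : Bicomplex) : Bicomplex :=
  (F w * dOm G w - dOm F w * G w) / denom2 F G w

/-! Characteristic coefficients with respect to the `†₃` conjugation (`j` case). -/

def denom3 (F G : Bicomplex → Bicomplex) (w : Bicomplex) : Bicomplex :=
  F w * dag3 (G w) - dag3 (F w) * G w

def aCoef3₁ (F G : Bicomplex → Bicomplex) (w : Bicomplex) : Bicomplex :=
  -((dag1 (F w) * dOmDag1 G w - dOmDag1 F w * dag1 (G w)) / denom3 F G w)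

def bCoef3₁ (F G : Bicomplex → Bicomplex) (w : Bicomplex) : Bicomplex :=
  (F w * dOmDag1 G w - dOmDag1 F w * G w) / denom3 F G w

def aCoef3₂ (F G : Bicomplex → Bicomplex) (w : Bicomplex) : Bicomplex :=
  -((dag2 (F w) * dOmBar G w - dOmBar F w * dag2 (G w)) / denom3 F G w)

def bCoef3₂ (F G : Bicomplex → Bicomplex) (w : Bicomplex) : Bicomplex :=
  (F w * dOmBar G w - dOmBar F w * G w) / denom3 F G w

def aCoef3₃ (F G : Bicomplex → Bicomplex) (w : Bicomplex) : Bicomplex :=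
  -((dag3 (F w) * dOmDag3 G w - dOmDag3 F w * dag3 (G w)) / denom3 F G w)

def bCoef3₃ (F G : Bicomplex → Bicomplex) (w : Bicomplex) : Bicomplex :=
  (F w * dOmDag3 G w - dOmDag3 F w * G w) / denom3 F G w

def Acoef3 (F G : Bicomplex → Bicomplex) (w : Bicomplex) : Bicomplex :=
  -((dag3 (F w) * dOm G w - dOm F w * dag3 (G w)) / denom3 F G w)

def Bcoef3 (F G : Bicomplex → Bicomplex) (w : Bicomplex) : Bicomplex :=
  (F w * dOm G w - dOm F w * G w) / denom3 F G w

/-! Classical (Bers) pseudoanalytic function theory in `ℂ(i₁)`. -/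

/-- A complex (in `i₁`) generating pair on `D ⊆ ℂ(i₁)`. -/
def ComplexGenPair (Fe Ge : ℂ → ℂ) (D : Set ℂ) : Prop :=
  ContDiffOn ℝ 2 Fe D ∧ ContDiffOn ℝ 2 Ge D ∧
    ∀ z ∈ D, ((starRingEnd ℂ) (Fe z) * Ge z).im ≠ 0

/-- The unique real `λ₀` with `w(z₀) = λ₀ F(z₀) + μ₀ G(z₀)`. -/
def lamBers (Fe Ge we : ℂ → ℂ) (z₀ : ℂ) : ℝ :=
  ((starRingEnd ℂ) (we z₀) * Ge z₀).im / ((starRingEnd ℂ) (Fe z₀) * Ge z₀).im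

/-- The unique real `μ₀` with `w(z₀) = λ₀ F(z₀) + μ₀ G(z₀)`. -/
def muBers (Fe Ge we : ℂ → ℂ) (z₀ : ℂ) : ℝ :=
  -(((starRingEnd ℂ) (we z₀) * Fe z₀).im / ((starRingEnd ℂ) (Fe z₀) * Ge z₀).im)

/-- `w_e` has Bers `(F_e,G_e)`-derivative `d` at `z₀`. -/
def HasBersDerivAt (Fe Ge we : ℂ → ℂ) (d z₀ : ℂ) : Prop :=
  Tendsto
    (fun z => (we z - (lamBers Fe Ge we z₀ : ℂ) * Fe z - (muBers Fe Ge we z₀ : ℂ) * Ge z)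
        / (z - z₀))
    (𝓝[≠] z₀) (𝓝 d)

/-- `w_e` is `(F_e,G_e)`-pseudoanalytic (in the sense of Bers) on `D`. -/
def BersPseudoanalyticOn (Fe Ge we : ℂ → ℂ) (D : Set ℂ) : Prop :=
  ∀ z ∈ D, ∃ d, HasBersDerivAt Fe Ge we d z

/-- `∂_z̄ = ½(∂ₓ + i ∂_y)` for functions `ℂ(i₁) → ℂ(i₁)`. -/
def dzbarC (g : ℂ → ℂ) (z : ℂ) : ℂ :=
  (deriv (fun t : ℝ => g (z + t)) 0 + Complex.I * deriv (fun t : ℝ => g (z + t * Complex.I)) 0) / 2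

/-- The Bers characteristic coefficient `a_{(F_e,G_e)}`. -/
def aBers (Fe Ge : ℂ → ℂ) (z : ℂ) : ℂ :=
  -(((starRingEnd ℂ) (Fe z) * dzbarC Ge z - dzbarC Fe z * (starRingEnd ℂ) (Ge z)) /
    (Fe z * (starRingEnd ℂ) (Ge z) - (starRingEnd ℂ) (Fe z) * Ge z))

/-- The Bers characteristic coefficient `b_{(F_e,G_e)}`. -/
def bBers (Fe Ge : ℂ → ℂ) (z : ℂ) : ℂ :=
  (Fe z * dzbarC Ge z - dzbarC Fe z * Ge z) /
    (Fe z * (starRingEnd ℂ) (Ge z) - (starRingEnd ℂ) (Fe z) * Ge z)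

/-- `(F, G)` is the `i₂e`-generating pair associated to complex generating pairs
`(F_{e1}, G_{e1})` on `D₁` and `(F_{e2}, G_{e2})` on `D₂`. -/
def I2eGenPair (Fe1 Ge1 Fe2 Ge2 : ℂ → ℂ) (D₁ D₂ : Set ℂ)
    (F G : Bicomplex → Bicomplex) : Prop :=
  ComplexGenPair Fe1 Ge1 D₁ ∧ ComplexGenPair Fe2 Ge2 D₂ ∧
  (∀ w, F w = ofComplex (Fe1 (P1 w)) * e1 + ofComplex (Fe2 (P2 w)) * e2) ∧
  (∀ w, G w = ofComplex (Ge1 (P1 w)) * e1 + ofComplex (Ge2 (P2 w)) * e2)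

end Bicomplex

open Bicomplex

/-! `P₁` and `P₂` are ring homomorphisms `𝕋 → ℂ(i₁)` that turn `†₃` into complex conjugation,
so `conj (Pₖ F) · Pₖ G = Pₖ (F†₃ G)`. Writing `Vec w = x₂ - x₃ j`, the imaginary parts of `P₁ w`
and `P₂ w` are the idempotent components `x₂ + x₃` and `x₂ - x₃` of `Vec w`, which both vanish
only when `Vec w = 0`. -/

namespace Bicomplex

lemma P1_mul (w v : Bicomplex) : P1 (w * v) = P1 w * P1 v := by
  simp only [P1, mul_z1, mul_z2]
  linear_combination (-(w.z2 * v.z2)) * Complex.I_sq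

lemma P2_mul (w v : Bicomplex) : P2 (w * v) = P2 w * P2 v := by
  simp only [P2, mul_z1, mul_z2]
  linear_combination (-(w.z2 * v.z2)) * Complex.I_sq

lemma P1_dag3 (w : Bicomplex) : P1 (dag3 w) = starRingEnd ℂ (P1 w) := by
  simp [P1, dag3]

lemma P2_dag3 (w : Bicomplex) : P2 (dag3 w) = starRingEnd ℂ (P2 w) := by
  simp [P2, dag3]

lemma im_P1 (w : Bicomplex) : (P1 w).im = (vec3 w).1 + (vec3 w).2 := by
  simp [P1, vec3, sub_eq_add_neg]

lemma im_P2 (w : Bicomplex) : (P2 w).im = (vec3 w).1 - (vec3 w).2 := by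
  simp [P2, vec3, sub_eq_add_neg]

lemma vec3_eq_zero_iff (w : Bicomplex) : vec3 w = 0 ↔ (P1 w).im = 0 ∧ (P2 w).im = 0 := by
  rw [im_P1, im_P2, Prod.ext_iff, Prod.fst_zero, Prod.snd_zero]
  constructor
  · rintro ⟨h₁, h₂⟩
    simp [h₁, h₂]
  · rintro ⟨h₁, h₂⟩
    constructor <;> linarith

end Bicomplex

/-- If on `D₀` one of `Im{conj(F_{e1})G_{e1}}` and `Im{conj(F_{e2})G_{e2}}`
is nonzero at every point (where `F_{ek} = Pₖ ∘ F`, `G_{ek} = Pₖ ∘ G`), then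
`Vec{F†₃G} ≠ 0` on `D₀`. -/
theorem vec3_ne_zero_of_idempotent_im_ne_zero (D₀ : Set Bicomplex)
    (F G : Bicomplex → Bicomplex)
    (h : ∀ ω ∈ D₀,
      ((starRingEnd ℂ) (P1 (F ω)) * P1 (G ω)).im ≠ 0 ∨
      ((starRingEnd ℂ) (P2 (F ω)) * P2 (G ω)).im ≠ 0) :
    ∀ ω ∈ D₀, vec3 (dag3 (F ω) * G ω) ≠ 0 := by
  intro ω hω hvec
  have him := h ω hω
  rw [← P1_dag3, ← P1_mul, ← P2_dag3, ← P2_mul, ← not_and_or] at him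
  exact him ((vec3_eq_zero_iff _).mp hvec)
end
end

section
/- Let f₀ : Ω ⊆ ℝ⁴ → ℂ(i₁) be a nonvanishing solution of the complexified Schrödinger equation (Δ_ℂ − ν(z₁, z₂))f₀ = 0, and let W be a solution of the bicomplex Vekua equation (∂_{ω†₂} − (∂_{ω†₂}f₀ / f₀)C)W = 0 on Ω. Then u = Sc(W) is a solution of (Δ_ℂ − ν)u = 0 on Ω, and v = Vec(W) is a solution of (Δ_ℂ + ν(z₁, z₂) − 2(|∇_ℂ f₀|_{i₁} / f₀)²)v = 0 on Ω, i.e. (Δ_ℂ − η)v = 0 with η = −ν + 2|∇_ℂ f₀|²_{i₁}/f₀². -/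
noncomputable section

open Complex Filter Topology

/-! Writing `W = u + v i₂`, the Vekua equation with coefficient `∂_{ω†₂}f₀ / f₀` is the
first-order system `f₀(∂₁u - ∂₂v) = u ∂₁f₀ + v ∂₂f₀`, `f₀(∂₁v + ∂₂u) = u ∂₂f₀ - v ∂₁f₀`.
Applying `∂₁`, `∂₂` to it and using the symmetry of mixed second derivatives, the combination
`∂₁(first) + ∂₂(second)` leaves only `f₀ Δu = u Δf₀`, and `f₀ (∂₁(second) - ∂₂(first))`
together with the undifferentiated system leaves `f₀² Δv = (2((∂₁f₀)² + (∂₂f₀)²) - f₀ Δf₀) v`.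
Substituting `Δf₀ = ν f₀` gives both equations. The computation is carried out for functions
on `ℂ × ℂ`, where `∂_{z₁}`, `∂_{z₂}` become the Wirtinger-type combinations `wirtinger₁`,
`wirtinger₂` of Fréchet derivatives. -/

namespace Wirtinger

section General

variable {E : Type*} [NormedAddCommGroup E] [NormedSpace ℝ E]

def wirtinger (a b : E) (G : E → ℂ) (p : E) : ℂ :=
  (fderiv ℝ G p a - I * fderiv ℝ G p b) / 2

variable {a b : E} {G H : E → ℂ} {p : E}

lemma wirtinger_congr (h : G =ᶠ[𝓝 p] H) : wirtinger a b G p = wirtinger a b H p := by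
  rw [wirtinger, wirtinger, h.fderiv_eq]

lemma wirtinger_add (hG : DifferentiableAt ℝ G p) (hH : DifferentiableAt ℝ H p) :
    wirtinger a b (fun q => G q + H q) p = wirtinger a b G p + wirtinger a b H p := by
  simp only [wirtinger, fderiv_fun_add hG hH, add_apply]
  ring

lemma wirtinger_sub (hG : DifferentiableAt ℝ G p) (hH : DifferentiableAt ℝ H p) :
    wirtinger a b (fun q => G q - H q) p = wirtinger a b G p - wirtinger a b H p := by
  simp only [wirtinger, fderiv_fun_sub hG hH, sub_apply]
  ring

lemma wirtinger_mul (hG : DifferentiableAt ℝ G p) (hH : DifferentiableAt ℝ H p) :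
    wirtinger a b (fun q => G q * H q) p =
      wirtinger a b G p * H p + G p * wirtinger a b H p := by
  simp only [wirtinger, fderiv_fun_mul hG hH, add_apply, smul_apply, smul_eq_mul]
  ring

lemma differentiableAt_fderiv_of_contDiffAt_two (hG : ContDiffAt ℝ 2 G p) :
    DifferentiableAt ℝ (fderiv ℝ G) p :=
  (hG.fderiv_right (m := 1) (by norm_num)).differentiableAt one_ne_zero

lemma hasFDerivAt_wirtinger (hG : DifferentiableAt ℝ (fderiv ℝ G) p) :
    HasFDerivAt (wirtinger a b G)
      ((2 : ℂ)⁻¹ • ((ContinuousLinearMap.apply ℝ ℂ a).comp (fderiv ℝ (fderiv ℝ G) p) -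
        I • (ContinuousLinearMap.apply ℝ ℂ b).comp (fderiv ℝ (fderiv ℝ G) p))) p := by
  have hdir (v : E) := (ContinuousLinearMap.apply ℝ ℂ v).hasFDerivAt.comp p hG.hasFDerivAt
  have hfun : wirtinger a b G = (2 : ℂ)⁻¹ • (fun q => fderiv ℝ G q a - I • fderiv ℝ G q b) := by
    funext q
    simp only [wirtinger, div_eq_inv_mul, smul_eq_mul, Pi.smul_apply]
  rw [hfun]
  exact ((hdir a).sub ((hdir b).const_smul I)).const_smul (2 : ℂ)⁻¹

lemma differentiableAt_wirtinger (hG : ContDiffAt ℝ 2 G p) :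
    DifferentiableAt ℝ (wirtinger a b G) p :=
  (hasFDerivAt_wirtinger (differentiableAt_fderiv_of_contDiffAt_two hG)).differentiableAt

lemma wirtinger_wirtinger {c d : E} (hG : DifferentiableAt ℝ (fderiv ℝ G) p) :
    wirtinger a b (wirtinger c d G) p =
      (fderiv ℝ (fderiv ℝ G) p a c - I * fderiv ℝ (fderiv ℝ G) p a d -
        I * fderiv ℝ (fderiv ℝ G) p b c - fderiv ℝ (fderiv ℝ G) p b d) / 4 := by
  simp only [wirtinger, (hasFDerivAt_wirtinger hG).fderiv, smul_apply, sub_apply,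
    ContinuousLinearMap.comp_apply, ContinuousLinearMap.apply_apply, smul_eq_mul]
  linear_combination fderiv ℝ (fderiv ℝ G) p b d / 4 * I_sq

lemma wirtinger_comm {c d : E} (hG : ContDiffAt ℝ 2 G p) :
    wirtinger a b (wirtinger c d G) p = wirtinger c d (wirtinger a b G) p := by
  have hsymm := hG.isSymmSndFDerivAt (by simp)
  rw [wirtinger_wirtinger, wirtinger_wirtinger, hsymm a c, hsymm a d, hsymm b c, hsymm b d]
  · ring
  all_goals exact differentiableAt_fderiv_of_contDiffAt_two hG

end General

abbrev wirtinger₁ : (ℂ × ℂ → ℂ) → ℂ × ℂ → ℂ := wirtinger (1, 0) (I, 0)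

abbrev wirtinger₂ : (ℂ × ℂ → ℂ) → ℂ × ℂ → ℂ := wirtinger (0, 1) (0, I)

def laplacian (G : ℂ × ℂ → ℂ) (p : ℂ × ℂ) : ℂ :=
  wirtinger₁ (wirtinger₁ G) p + wirtinger₂ (wirtinger₂ G) p

/-- The Vekua equation `(∂_{ω†₂} - (∂_{ω†₂}F / F) C)(U + V i₂) = 0` in `ℂ(i₁)`-components,
cleared of the denominator `F`. -/
def VekuaSystem (F U V : ℂ × ℂ → ℂ) (q : ℂ × ℂ) : Prop :=
  F q * (wirtinger₁ U q - wirtinger₂ V q) = wirtinger₁ F q * U q + wirtinger₂ F q * V q ∧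
    F q * (wirtinger₁ V q + wirtinger₂ U q) = wirtinger₂ F q * U q - wirtinger₁ F q * V q

variable {F U V : ℂ × ℂ → ℂ} {p : ℂ × ℂ}

lemma wirtinger_vekuaSystem (hsys : ∀ᶠ q in 𝓝 p, VekuaSystem F U V q)
    (hF : ContDiffAt ℝ 2 F p) (hU : ContDiffAt ℝ 2 U p) (hV : ContDiffAt ℝ 2 V p)
    (a b : ℂ × ℂ) :
    let D := wirtinger a b
    D F p * (wirtinger₁ U p - wirtinger₂ V p) +
        F p * (D (wirtinger₁ U) p - D (wirtinger₂ V) p) =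
      D (wirtinger₁ F) p * U p + wirtinger₁ F p * D U p +
        (D (wirtinger₂ F) p * V p + wirtinger₂ F p * D V p) ∧
    D F p * (wirtinger₁ V p + wirtinger₂ U p) +
        F p * (D (wirtinger₁ V) p + D (wirtinger₂ U) p) =
      D (wirtinger₂ F) p * U p + wirtinger₂ F p * D U p -
        (D (wirtinger₁ F) p * V p + wirtinger₁ F p * D V p) := by
  have hA := wirtinger_congr (a := a) (b := b) (hsys.mono fun _ h => h.1)
  have hB := wirtinger_congr (a := a) (b := b) (hsys.mono fun _ h => h.2)
  have := hF.differentiableAt (by norm_num)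
  have := hU.differentiableAt (by norm_num)
  have := hV.differentiableAt (by norm_num)
  have : DifferentiableAt ℝ (wirtinger₁ F) p := differentiableAt_wirtinger hF
  have : DifferentiableAt ℝ (wirtinger₂ F) p := differentiableAt_wirtinger hF
  have : DifferentiableAt ℝ (wirtinger₁ U) p := differentiableAt_wirtinger hU
  have : DifferentiableAt ℝ (wirtinger₂ U) p := differentiableAt_wirtinger hU
  have : DifferentiableAt ℝ (wirtinger₁ V) p := differentiableAt_wirtinger hV
  have : DifferentiableAt ℝ (wirtinger₂ V) p := differentiableAt_wirtinger hV
  simp (disch := fun_prop) only [wirtinger_mul, wirtinger_add, wirtinger_sub] at hA hB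
  exact ⟨hA, hB⟩

lemma mul_laplacian_of_vekuaSystem (hsys : ∀ᶠ q in 𝓝 p, VekuaSystem F U V q)
    (hF : ContDiffAt ℝ 2 F p) (hU : ContDiffAt ℝ 2 U p) (hV : ContDiffAt ℝ 2 V p) :
    F p * laplacian U p = laplacian F p * U p := by
  obtain ⟨hA₁, -⟩ := wirtinger_vekuaSystem hsys hF hU hV (1, 0) (I, 0)
  obtain ⟨-, hB₂⟩ := wirtinger_vekuaSystem hsys hF hU hV (0, 1) (0, I)
  have hV₁₂ : wirtinger₂ (wirtinger₁ V) p = wirtinger₁ (wirtinger₂ V) p := wirtinger_comm hV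
  have hF₁₂ : wirtinger₂ (wirtinger₁ F) p = wirtinger₁ (wirtinger₂ F) p := wirtinger_comm hF
  unfold laplacian
  linear_combination hA₁ + hB₂ - F p * hV₁₂ - V p * hF₁₂

lemma sq_mul_laplacian_of_vekuaSystem (hsys : ∀ᶠ q in 𝓝 p, VekuaSystem F U V q)
    (hF : ContDiffAt ℝ 2 F p) (hU : ContDiffAt ℝ 2 U p) (hV : ContDiffAt ℝ 2 V p) :
    F p ^ 2 * laplacian V p =
      (2 * (wirtinger₁ F p ^ 2 + wirtinger₂ F p ^ 2) - F p * laplacian F p) * V p := by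
  obtain ⟨hA, hB⟩ := hsys.self_of_nhds
  obtain ⟨-, hB₁⟩ := wirtinger_vekuaSystem hsys hF hU hV (1, 0) (I, 0)
  obtain ⟨hA₂, -⟩ := wirtinger_vekuaSystem hsys hF hU hV (0, 1) (0, I)
  have hU₁₂ : wirtinger₂ (wirtinger₁ U) p = wirtinger₁ (wirtinger₂ U) p := wirtinger_comm hU
  have hF₁₂ : wirtinger₂ (wirtinger₁ F) p = wirtinger₁ (wirtinger₂ F) p := wirtinger_comm hF
  unfold laplacian
  linear_combination F p * hB₁ - F p * hA₂ + 2 * wirtinger₂ F p * hA - 2 * wirtinger₁ F p * hB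
    + F p ^ 2 * hU₁₂ - F p * U p * hF₁₂

end Wirtinger

namespace Bicomplex

open Wirtinger

@[simp] lemma sub_z1 (w v : Bicomplex) : (w - v).z1 = w.z1 - v.z1 := by
  simp [sub_eq_add_neg]

@[simp] lemma sub_z2 (w v : Bicomplex) : (w - v).z2 = w.z2 - v.z2 := by
  simp [sub_eq_add_neg]

lemma div_ofComplex (w : Bicomplex) {c : ℂ} (hc : c ≠ 0) :
    w / ofComplex c = ⟨w.z1 / c, w.z2 / c⟩ := by
  change w * ⟨c / (c ^ 2 + 0 ^ 2), -0 / (c ^ 2 + 0 ^ 2)⟩ = _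
  ext <;> simp only [ne_eq, OfNat.ofNat_ne_zero, not_false_eq_true, zero_pow, add_zero, neg_zero,
    zero_div, mul_z1, mul_z2, mul_zero, sub_zero, zero_add] <;> field_simp

lemma dOmBar_eq (f : Bicomplex → Bicomplex) (w : Bicomplex) :
    dOmBar f w = ⟨(dz1 (s1 f) w - dz2 (s2 f) w) / 2, (dz1 (s2 f) w + dz2 (s1 f) w) / 2⟩ := by
  ext <;> simp only [dOmBar, ofComplex, one_div, dZ1, i2, dZ2, mul_z1, mul_z2, add_z1, add_z2,
    zero_mul, one_mul, zero_sub, zero_add, sub_zero, add_zero] <;> ring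

lemma dz1_const (c : ℂ) (w : Bicomplex) : dz1 (fun _ => c) w = 0 := by
  simp [dz1, pd]

lemma dz2_const (c : ℂ) (w : Bicomplex) : dz2 (fun _ => c) w = 0 := by
  simp [dz2, pd]

lemma dOmBar_ofComplex (g : Bicomplex → ℂ) (w : Bicomplex) :
    dOmBar (fun u => ofComplex (g u)) w = ⟨dz1 g w / 2, dz2 g w / 2⟩ := by
  have hs1 : s1 (fun u => ofComplex (g u)) = g := rfl
  have hs2 : s2 (fun u => ofComplex (g u)) = fun _ => 0 := rfl
  rw [dOmBar_eq, hs1, hs2, dz1_const, dz2_const, sub_zero, zero_add]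

lemma vekua_components {f₀ : Bicomplex → ℂ} {W : Bicomplex → Bicomplex} {w : Bicomplex}
    (hf₀ : f₀ w ≠ 0)
    (hW : dOmBar W w -
      (dOmBar (fun u => ofComplex (f₀ u)) w / ofComplex (f₀ w)) * dag2 (W w) = 0) :
    f₀ w * (dz1 (s1 W) w - dz2 (s2 W) w) = dz1 f₀ w * (W w).z1 + dz2 f₀ w * (W w).z2 ∧
      f₀ w * (dz1 (s2 W) w + dz2 (s1 W) w) = dz2 f₀ w * (W w).z1 - dz1 f₀ w * (W w).z2 := by
  rw [dOmBar_eq, dOmBar_ofComplex, div_ofComplex _ hf₀] at hW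
  have h₁ := congrArg z1 hW
  have h₂ := congrArg z2 hW
  simp only [dag2, sub_z1, sub_z2, mul_z1, mul_z2, mul_neg, sub_neg_eq_add, zero_z1, zero_z2]
    at h₁ h₂
  field_simp at h₁ h₂
  constructor
  · linear_combination h₁
  · linear_combination h₂

@[simp] lemma ofProd_toProd (w : Bicomplex) : ofProd (toProd w) = w := rfl

lemma continuous_ofProd : Continuous ofProd := continuous_induced_rng.mpr continuous_id

lemma image_toProd (Ω : Set Bicomplex) : toProd '' Ω = ofProd ⁻¹' Ω :=
  Set.ext fun q => ⟨by rintro ⟨w, hw, rfl⟩; exact hw, fun hq => ⟨ofProd q, hq, rfl⟩⟩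

lemma ofProd_preimage_mem_nhds {Ω : Set Bicomplex} (hΩ : IsOpen Ω) {w : Bicomplex}
    (hw : w ∈ Ω) : ofProd ⁻¹' Ω ∈ 𝓝 (toProd w) :=
  (hΩ.preimage continuous_ofProd).mem_nhds hw

lemma CContDiffOn.contDiffAt {n : ℕ∞} {g : Bicomplex → ℂ} {Ω : Set Bicomplex}
    (hg : CContDiffOn n g Ω) (hΩ : IsOpen Ω) {w : Bicomplex} (hw : w ∈ Ω) :
    ContDiffAt ℝ n (fun q => g (ofProd q)) (toProd w) := by
  rw [CContDiffOn, image_toProd] at hg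
  exact hg.contDiffAt (ofProd_preimage_mem_nhds hΩ hw)

lemma TContDiffOn.cContDiffOn_z1 {n : ℕ∞} {f : Bicomplex → Bicomplex} {Ω : Set Bicomplex}
    (hf : TContDiffOn n f Ω) : CContDiffOn n (fun w => (f w).z1) Ω :=
  ContDiffOn.fst hf

lemma TContDiffOn.cContDiffOn_z2 {n : ℕ∞} {f : Bicomplex → Bicomplex} {Ω : Set Bicomplex}
    (hf : TContDiffOn n f Ω) : CContDiffOn n (fun w => (f w).z2) Ω :=
  ContDiffOn.snd hf

lemma pd_eq_fderiv {g : Bicomplex → ℂ} {w : Bicomplex}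
    (hg : DifferentiableAt ℝ (fun q => g (ofProd q)) (toProd w)) (e : Bicomplex) :
    pd e g w = fderiv ℝ (fun q => g (ofProd q)) (toProd w) (toProd e) := by
  have hline : HasDerivAt (fun t : ℝ => toProd w + t • toProd e) (toProd e) 0 := by
    simpa using ((hasDerivAt_id (0 : ℝ)).smul_const (toProd e)).const_add (toProd w)
  have hcomp := (hg.hasFDerivAt.comp_hasDerivAt_of_eq 0 hline (by simp)).deriv
  rw [← hcomp, pd]
  congr 1
  funext t
  congr 1
  ext <;> simp [ofReal, ofProd, toProd, Complex.real_smul]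

lemma dz1_eq_wirtinger₁ {g : Bicomplex → ℂ} {G : ℂ × ℂ → ℂ} {w : Bicomplex}
    (hG : DifferentiableAt ℝ G (toProd w)) (hgG : (fun q => g (ofProd q)) =ᶠ[𝓝 (toProd w)] G) :
    dz1 g w = wirtinger₁ G (toProd w) := by
  have hg := hG.congr_of_eventuallyEq hgG
  rw [dz1, pd_eq_fderiv hg, pd_eq_fderiv hg, hgG.fderiv_eq]
  rfl

lemma dz2_eq_wirtinger₂ {g : Bicomplex → ℂ} {G : ℂ × ℂ → ℂ} {w : Bicomplex}
    (hG : DifferentiableAt ℝ G (toProd w)) (hgG : (fun q => g (ofProd q)) =ᶠ[𝓝 (toProd w)] G) :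
    dz2 g w = wirtinger₂ G (toProd w) := by
  have hg := hG.congr_of_eventuallyEq hgG
  rw [dz2, pd_eq_fderiv hg, pd_eq_fderiv hg, hgG.fderiv_eq]
  rfl

lemma lapC_eq_laplacian {g : Bicomplex → ℂ} {w : Bicomplex}
    (hg : ContDiffAt ℝ 2 (fun q => g (ofProd q)) (toProd w)) :
    lapC g w = laplacian (fun q => g (ofProd q)) (toProd w) := by
  have hnear := hg.eventually (by simp)
  have h₁ : (fun q => dz1 g (ofProd q)) =ᶠ[𝓝 (toProd w)] wirtinger₁ fun q => g (ofProd q) :=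
    hnear.mono fun q hq => dz1_eq_wirtinger₁ (hq.differentiableAt (by norm_num)) .rfl
  have h₂ : (fun q => dz2 g (ofProd q)) =ᶠ[𝓝 (toProd w)] wirtinger₂ fun q => g (ofProd q) :=
    hnear.mono fun q hq => dz2_eq_wirtinger₂ (hq.differentiableAt (by norm_num)) .rfl
  rw [lapC, laplacian, dz1_eq_wirtinger₁ (differentiableAt_wirtinger hg) h₁,
    dz2_eq_wirtinger₂ (differentiableAt_wirtinger hg) h₂]

lemma eventually_vekuaSystem {Ω : Set Bicomplex} (hΩ : IsOpen Ω) {f₀ : Bicomplex → ℂ}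
    {W : Bicomplex → Bicomplex} (hf₀sm : CContDiffOn 2 f₀ Ω) (hf₀ne : ∀ w ∈ Ω, f₀ w ≠ 0)
    (hWsm : TContDiffOn 2 W Ω)
    (hW : ∀ w ∈ Ω, dOmBar W w -
      (dOmBar (fun u => ofComplex (f₀ u)) w / ofComplex (f₀ w)) * dag2 (W w) = 0)
    {w : Bicomplex} (hw : w ∈ Ω) :
    ∀ᶠ q in 𝓝 (toProd w), VekuaSystem (fun q => f₀ (ofProd q))
      (fun q => (W (ofProd q)).z1) (fun q => (W (ofProd q)).z2) q := by
  filter_upwards [ofProd_preimage_mem_nhds hΩ hw] with q hq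
  have hdz {g : Bicomplex → ℂ} (hg : CContDiffOn 2 g Ω) :
      dz1 g (ofProd q) = wirtinger₁ (fun q => g (ofProd q)) q ∧
        dz2 g (ofProd q) = wirtinger₂ (fun q => g (ofProd q)) q := by
    have hdiff := (hg.contDiffAt hΩ hq).differentiableAt (by norm_num)
    exact ⟨dz1_eq_wirtinger₁ hdiff .rfl, dz2_eq_wirtinger₂ hdiff .rfl⟩
  obtain ⟨hF₁, hF₂⟩ := hdz hf₀sm
  obtain ⟨hU₁, hU₂⟩ := hdz (g := s1 W) hWsm.cContDiffOn_z1
  obtain ⟨hV₁, hV₂⟩ := hdz (g := s2 W) hWsm.cContDiffOn_z2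
  have := vekua_components (hf₀ne _ hq) (hW _ hq)
  rwa [hF₁, hF₂, hU₁, hU₂, hV₁, hV₂] at this

end Bicomplex

open Bicomplex Wirtinger

/-- Let `f₀` be a nonvanishing solution of the complexified Schrödinger
equation `(Δ_ℂ - ν)f₀ = 0` on `Ω` and let `W` solve the bicomplex Vekua equation
`(∂_{ω†₂} - (∂_{ω†₂}f₀/f₀)C)W = 0` on `Ω`. Then `u = Sc(W)` solves `(Δ_ℂ - ν)u = 0` and
`v = Vec(W)` solves `(Δ_ℂ - η)v = 0` with `η = -ν + 2|∇_ℂ f₀|²_{i₁}/f₀²`. -/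
theorem scalar_and_vector_parts_of_vekua_solution (Ω : Set Bicomplex) (hΩ : IsOpen Ω)
    (ν f₀ : Bicomplex → ℂ)
    (hf₀sm : CContDiffOn 2 f₀ Ω)
    (hf₀ne : ∀ w ∈ Ω, f₀ w ≠ 0)
    (hf₀sol : ∀ w ∈ Ω, lapC f₀ w - ν w * f₀ w = 0)
    (W : Bicomplex → Bicomplex) (hWsm : TContDiffOn 2 W Ω)
    (hW : ∀ w ∈ Ω,
      dOmBar W w -
        (dOmBar (fun u => ofComplex (f₀ u)) w / ofComplex (f₀ w)) * dag2 (W w) = 0) :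
    (∀ w ∈ Ω, lapC (fun u => (W u).z1) w - ν w * (W w).z1 = 0) ∧
    (∀ w ∈ Ω,
      lapC (fun u => (W u).z2) w -
        (-ν w + 2 * ((dz1 f₀ w) ^ 2 + (dz2 f₀ w) ^ 2) / (f₀ w) ^ 2) * (W w).z2 = 0) := by
  rw [← forall₂_and]
  intro w hw
  have hF := hf₀sm.contDiffAt hΩ hw
  have hU := hWsm.cContDiffOn_z1.contDiffAt hΩ hw
  have hV := hWsm.cContDiffOn_z2.contDiffAt hΩ hw
  have hsys := eventually_vekuaSystem hΩ hf₀sm hf₀ne hWsm hW hw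
  have hscalar := mul_laplacian_of_vekuaSystem hsys hF hU hV
  have hvector := sq_mul_laplacian_of_vekuaSystem hsys hF hU hV
  have hsol := hf₀sol w hw
  have hf₀ := hf₀ne w hw
  rw [ofProd_toProd] at hscalar hvector
  rw [lapC_eq_laplacian hF] at hsol
  rw [lapC_eq_laplacian hU, lapC_eq_laplacian hV,
    dz1_eq_wirtinger₁ (hF.differentiableAt (by norm_num)) .rfl,
    dz2_eq_wirtinger₂ (hF.differentiableAt (by norm_num)) .rfl]
  constructor
  · apply mul_left_cancel₀ hf₀
    linear_combination hscalar + (W w).z1 * hsol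
  · field_simp
    linear_combination hvector - (W w).z2 * f₀ w * hsol
end
end
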